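/- Every element x of a cosimplicial set X in cosimplicial degree q can be written uniquely as x = D(y) where D is a composition of coface maps (i.e. X applied to a monotone injection) and y ∈ X^p (p ≤ q) is not itself in the image of any coface map. Moreover the injection D ∈ Δ(p,q) is unique unless p = 0 and d^0 y = d^1 y, in which case D(y) = D'(y) for all injections D, D' ∈ Δ(0,q). -/

import Mathlib

/-!
STATEMENT 2: Every element `x` of a cosimplicial set `X` in cosimplicial degree `q` can be
written uniquely as `x = D(y)` with `D` (the image under `X` of) a monotone injection
`[p] → [q]` (a composition of coface maps) and `y ∈ X^p` not itself a coface.  Moreover the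
injection `D ∈ Δ(p,q)` is unique unless `p = 0` and `d^0 y = d^1 y`, in which case
`D(y) = D'(y)` for all injections `D, D' ∈ Δ(0,q)`.
-/

open CategoryTheory

/-- An element `y ∈ X^p` is *not a coface* if it is not in the image of `X(f)` for any
non-identity monotone injection `f : [p'] → [p]` (equivalently, for any injective
monotone map from a strictly smaller object). -/
def NotCoface (X : CosimplicialObject (Type)) {p : ℕ}
    (y : X.obj (SimplexCategory.mk p)) : Prop :=
  ∀ (p' : ℕ), p' < p → ∀ (f : SimplexCategory.mk p' ⟶ SimplexCategory.mk p),
    Function.Injective f.toOrderHom → ∀ z, X.map f z ≠ y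

/-!
Monotone injections `D : [p] → [q]` have monotone retractions. If `D₁ y₁ = D₂ y₂` with `D₁`
injective and `y₁` not a coface, then `(D₂ ≫ r) y₂ = y₁` for every retraction `r` of `D₁`, and
`D₂ ≫ r` must be surjective, since a non-surjective map factors through a coface. Comparing
both ways gives `p₁ = p₂`, then `D₂ ≫ r = 𝟙` and `y₁ = y₂`. Taking for `r` the ceiling and the
floor retraction of `D₁` squeezes `D₂ j = D₁ j` for `j ≠ last` and for `j ≠ 0` respectively,
which covers every `j` once `p ≠ 0`. For `p = 0`, two vertices `a < b` of `[q]` are the faces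
`δ 1 ≫ e` and `δ 0 ≫ e` of the edge `e : [1] → [q]` joining them, and `e` has a retraction;
so `D y = D' y` for distinct vertices `D, D'` amounts to `d⁰ y = d¹ y`.
-/

open Simplicial SimplexCategory

namespace SimplexCategory

variable {p q : ℕ}

/-- `k ↦ min {j | k ≤ D j}`, read as `Fin.last p` when no such `j` exists. -/
noncomputable def ceilRetraction (D : ⦋p⦌ ⟶ ⦋q⦌) : ⦋q⦌ ⟶ ⦋p⦌ :=
  mkHom
    { toFun := fun k => (Finset.univ.filter fun j => k ≤ D.toOrderHom j).inf id
      monotone' := fun _ _ hkk' => Finset.inf_mono fun j hj => by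
        simp only [Finset.mem_filter, Finset.mem_univ, true_and] at hj ⊢
        exact hkk'.trans hj }

/-- `k ↦ max {j | D j ≤ k}`, read as `0` when no such `j` exists. -/
noncomputable def floorRetraction (D : ⦋p⦌ ⟶ ⦋q⦌) : ⦋q⦌ ⟶ ⦋p⦌ :=
  mkHom
    { toFun := fun k => (Finset.univ.filter fun j => D.toOrderHom j ≤ k).sup id
      monotone' := fun _ _ hkk' => Finset.sup_mono fun j hj => by
        simp only [Finset.mem_filter, Finset.mem_univ, true_and] at hj ⊢
        exact hj.trans hkk' }

theorem ceilRetraction_apply (D : ⦋p⦌ ⟶ ⦋q⦌) (k : Fin (q + 1)) :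
    (ceilRetraction D).toOrderHom k = (Finset.univ.filter fun j => k ≤ D.toOrderHom j).inf id :=
  rfl

theorem floorRetraction_apply (D : ⦋p⦌ ⟶ ⦋q⦌) (k : Fin (q + 1)) :
    (floorRetraction D).toOrderHom k = (Finset.univ.filter fun j => D.toOrderHom j ≤ k).sup id :=
  rfl

theorem ceilRetraction_le_iff (D : ⦋p⦌ ⟶ ⦋q⦌) {k : Fin (q + 1)} {j : Fin (p + 1)}
    (hj : j < Fin.last p) : (ceilRetraction D).toOrderHom k ≤ j ↔ k ≤ D.toOrderHom j := by
  rw [ceilRetraction_apply, Finset.inf_le_iff (by exact hj)]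
  simp only [Finset.mem_filter, Finset.mem_univ, true_and, id]
  exact ⟨fun ⟨i, hki, hij⟩ => hki.trans (D.toOrderHom.monotone hij), fun hkj => ⟨j, hkj, le_rfl⟩⟩

theorem le_floorRetraction_iff (D : ⦋p⦌ ⟶ ⦋q⦌) {k : Fin (q + 1)} {j : Fin (p + 1)}
    (hj : 0 < j) : j ≤ (floorRetraction D).toOrderHom k ↔ D.toOrderHom j ≤ k := by
  rw [floorRetraction_apply, Finset.le_sup_iff (by exact hj)]
  simp only [Finset.mem_filter, Finset.mem_univ, true_and, id]
  exact ⟨fun ⟨i, hik, hji⟩ => (D.toOrderHom.monotone hji).trans hik, fun hjk => ⟨j, hjk, le_rfl⟩⟩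

theorem comp_ceilRetraction {D : ⦋p⦌ ⟶ ⦋q⦌} (hD : Function.Injective D.toOrderHom) :
    D ≫ ceilRetraction D = 𝟙 _ := by
  have hD' := D.toOrderHom.monotone.strictMono_of_injective hD
  ext i : 3
  change (ceilRetraction D).toOrderHom (D.toOrderHom i) = i
  refine le_antisymm ?_ ?_
  · rcases (Fin.le_last i).lt_or_eq with hi | rfl
    · exact (ceilRetraction_le_iff D hi).mpr le_rfl
    · exact Fin.le_last _
  · rw [ceilRetraction_apply]
    refine Finset.le_inf fun j hj => ?_
    simp only [Finset.mem_filter, Finset.mem_univ, true_and] at hj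
    exact hD'.le_iff_le.mp hj

theorem comp_floorRetraction {D : ⦋p⦌ ⟶ ⦋q⦌} (hD : Function.Injective D.toOrderHom) :
    D ≫ floorRetraction D = 𝟙 _ := by
  have hD' := D.toOrderHom.monotone.strictMono_of_injective hD
  ext i : 3
  change (floorRetraction D).toOrderHom (D.toOrderHom i) = i
  refine le_antisymm ?_ ?_
  · rw [floorRetraction_apply]
    refine Finset.sup_le fun j hj => ?_
    simp only [Finset.mem_filter, Finset.mem_univ, true_and] at hj
    exact hD'.le_iff_le.mp hj
  · rcases (Fin.zero_le i).lt_or_eq with hi | rfl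
    · exact (le_floorRetraction_iff D hi).mpr le_rfl
    · exact Fin.zero_le _

theorem δ_one_comp_mkOfLe (a b : Fin (q + 1)) (hab : a ≤ b) :
    δ 1 ≫ mkOfLe a b hab = const ⦋0⦌ ⦋q⦌ a :=
  Hom.ext_zero_left _ _

theorem δ_zero_comp_mkOfLe (a b : Fin (q + 1)) (hab : a ≤ b) :
    δ 0 ≫ mkOfLe a b hab = const ⦋0⦌ ⦋q⦌ b :=
  Hom.ext_zero_left _ _

theorem injective_mkOfLe {a b : Fin (q + 1)} (hab : a < b) :
    Function.Injective (mkOfLe a b hab.le).toOrderHom :=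
  (Fin.strictMono_iff_lt_succ.mpr fun i => by fin_cases i; exact hab).injective

end SimplexCategory

namespace CosimplicialObject

variable {X : CosimplicialObject Type} {p₁ p₂ q : ℕ}

theorem map_comp_retraction_eq {D₁ : ⦋p₁⦌ ⟶ ⦋q⦌} {D₂ : ⦋p₂⦌ ⟶ ⦋q⦌} {y₁ : X.obj ⦋p₁⦌}
    {y₂ : X.obj ⦋p₂⦌} (h : X.map D₁ y₁ = X.map D₂ y₂) {r : ⦋q⦌ ⟶ ⦋p₁⦌} (hr : D₁ ≫ r = 𝟙 _) :
    X.map (D₂ ≫ r) y₂ = y₁ := by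
  rw [Functor.map_comp_apply X, ← h, ← Functor.map_comp_apply X, hr,
    Functor.map_id_apply X]

theorem map_const_eq_of_δ_eq {y : X.obj ⦋0⦌} (hy : X.δ 0 y = X.δ 1 y) (a b : Fin (q + 1)) :
    X.map (const ⦋0⦌ ⦋q⦌ a) y = X.map (const ⦋0⦌ ⦋q⦌ b) y := by
  wlog hab : a ≤ b generalizing a b
  · exact (this b a (le_of_not_ge hab)).symm
  rw [← δ_one_comp_mkOfLe a b hab, ← δ_zero_comp_mkOfLe a b hab,
    Functor.map_comp_apply X, Functor.map_comp_apply X]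
  exact congrArg (X.map (mkOfLe a b hab)) hy.symm

theorem map_eq_map_of_δ_eq {y : X.obj ⦋0⦌} (hy : X.δ 0 y = X.δ 1 y) (D D' : ⦋0⦌ ⟶ ⦋q⦌) :
    X.map D y = X.map D' y := by
  rw [eq_const_of_zero D, eq_const_of_zero D']
  exact map_const_eq_of_δ_eq hy _ _

theorem δ_eq_of_map_eq_of_ne {y : X.obj ⦋0⦌} {D₁ D₂ : ⦋0⦌ ⟶ ⦋q⦌} (hne : D₁ ≠ D₂)
    (h : X.map D₁ y = X.map D₂ y) : X.δ 0 y = X.δ 1 y := by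
  wlog hlt : D₁.toOrderHom 0 < D₂.toOrderHom 0 generalizing D₁ D₂
  · refine this hne.symm h.symm ((le_of_not_gt hlt).lt_of_ne fun he => hne ?_)
    exact Hom.ext_zero_left _ _ he.symm
  set e := mkOfLe _ _ hlt.le
  have he : e ≫ ceilRetraction e = 𝟙 _ := comp_ceilRetraction (injective_mkOfLe hlt)
  have hδ (i : Fin 2) : X.δ i y = X.map (ceilRetraction e) (X.map (δ i ≫ e) y) := by
    rw [← Functor.map_comp_apply X, Category.assoc, he, Category.comp_id]
    rfl
  rw [hδ 0, hδ 1, δ_zero_comp_mkOfLe, δ_one_comp_mkOfLe, ← eq_const_of_zero D₁,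
    ← eq_const_of_zero D₂, h]

end CosimplicialObject

namespace NotCoface

variable {X : CosimplicialObject Type} {p q : ℕ} {y : X.obj ⦋p⦌}

theorem surjective_of_map_eq (hy : NotCoface X y) {Δ : SimplexCategory} (φ : Δ ⟶ ⦋p⦌)
    {z : X.obj Δ} (hz : X.map φ z = y) : Function.Surjective φ.toOrderHom := by
  cases p with
  | zero => exact fun _ => ⟨0, Subsingleton.elim (α := Fin 1) _ _⟩
  | succ n =>
    by_contra hφ
    obtain ⟨i, θ, rfl⟩ := eq_comp_δ_of_not_surjective φ hφ
    exact hy n n.lt_succ_self (δ i) (mono_iff_injective.mp inferInstance) (X.map θ z)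
      (by rwa [Functor.map_comp_apply X] at hz)

theorem eq_id_of_map_eq (hy : NotCoface X y) (φ : ⦋p⦌ ⟶ ⦋p⦌) {z : X.obj ⦋p⦌}
    (hz : X.map φ z = y) : φ = 𝟙 _ :=
  have : Epi φ := epi_iff_surjective.mpr (hy.surjective_of_map_eq φ hz)
  eq_id_of_epi φ

theorem comp_eq_id_of_map_eq (hy : NotCoface X y) {D₁ D₂ : ⦋p⦌ ⟶ ⦋q⦌}
    (h : X.map D₁ y = X.map D₂ y) {r : ⦋q⦌ ⟶ ⦋p⦌} (hr : D₁ ≫ r = 𝟙 _) : D₂ ≫ r = 𝟙 _ :=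
  hy.eq_id_of_map_eq _ (CosimplicialObject.map_comp_retraction_eq h hr)

theorem apply_le_of_map_eq (hy : NotCoface X y) {D₁ D₂ : ⦋p⦌ ⟶ ⦋q⦌}
    (hD₁ : Function.Injective D₁.toOrderHom) (h : X.map D₁ y = X.map D₂ y) {i : Fin (p + 1)}
    (hi : i < Fin.last p) : D₂.toOrderHom i ≤ D₁.toOrderHom i := by
  have hr := congr_toOrderHom_apply (hy.comp_eq_id_of_map_eq h (comp_ceilRetraction hD₁)) i
  exact (ceilRetraction_le_iff D₁ hi).mp hr.le

theorem le_apply_of_map_eq (hy : NotCoface X y) {D₁ D₂ : ⦋p⦌ ⟶ ⦋q⦌}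
    (hD₁ : Function.Injective D₁.toOrderHom) (h : X.map D₁ y = X.map D₂ y) {i : Fin (p + 1)}
    (hi : 0 < i) : D₁.toOrderHom i ≤ D₂.toOrderHom i := by
  have hr := congr_toOrderHom_apply (hy.comp_eq_id_of_map_eq h (comp_floorRetraction hD₁)) i
  exact (le_floorRetraction_iff D₁ hi).mp hr.ge

theorem hom_eq_of_map_eq (hy : NotCoface X y) (hp : p ≠ 0) {D₁ D₂ : ⦋p⦌ ⟶ ⦋q⦌}
    (hD₁ : Function.Injective D₁.toOrderHom) (hD₂ : Function.Injective D₂.toOrderHom)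
    (h : X.map D₁ y = X.map D₂ y) : D₁ = D₂ := by
  ext i : 3
  rcases (Fin.le_last i).lt_or_eq with hi | rfl
  · exact le_antisymm (hy.apply_le_of_map_eq hD₂ h.symm hi) (hy.apply_le_of_map_eq hD₁ h hi)
  · have hi : 0 < Fin.last p := Fin.lt_def.mpr (Nat.pos_of_ne_zero hp)
    exact le_antisymm (hy.le_apply_of_map_eq hD₁ h hi) (hy.le_apply_of_map_eq hD₂ h.symm hi)

theorem le_of_map_eq (hy : NotCoface X y) {p' : ℕ} {D : ⦋p⦌ ⟶ ⦋q⦌} {D' : ⦋p'⦌ ⟶ ⦋q⦌}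
    (hD : Function.Injective D.toOrderHom) {y' : X.obj ⦋p'⦌} (h : X.map D y = X.map D' y') :
    p ≤ p' := by
  have hr := CosimplicialObject.map_comp_retraction_eq h (comp_ceilRetraction hD)
  have : Epi (D' ≫ ceilRetraction D) := epi_iff_surjective.mpr (hy.surjective_of_map_eq _ hr)
  exact le_of_epi (D' ≫ ceilRetraction D)

theorem eq_of_map_eq (hy : NotCoface X y) {D D' : ⦋p⦌ ⟶ ⦋q⦌}
    (hD : Function.Injective D.toOrderHom) {y' : X.obj ⦋p⦌} (h : X.map D y = X.map D' y') :
    y' = y := by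
  have hr := CosimplicialObject.map_comp_retraction_eq h (comp_ceilRetraction hD)
  rwa [hy.eq_id_of_map_eq _ hr, Functor.map_id_apply X] at hr

end NotCoface

theorem exists_notCoface_map_eq (X : CosimplicialObject Type) {q : ℕ} (x : X.obj ⦋q⦌) :
    ∃ (p : ℕ) (_ : p ≤ q) (D : ⦋p⦌ ⟶ ⦋q⦌) (y : X.obj ⦋p⦌),
      Function.Injective D.toOrderHom ∧ NotCoface X y ∧ X.map D y = x := by
  induction q using Nat.strong_induction_on with
  | _ q ih =>
  by_cases hx : NotCoface X x
  · exact ⟨q, le_rfl, 𝟙 _, x, fun _ _ h => h, hx, Functor.map_id_apply X _ x⟩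
  · simp only [NotCoface, not_forall, not_not] at hx
    obtain ⟨p', hp', f, hf, z, rfl⟩ := hx
    obtain ⟨p, hp, D, y, hD, hy, rfl⟩ := ih p' hp' z
    exact ⟨p, by omega, D ≫ f, y, hf.comp hD, hy, Functor.map_comp_apply X D f y⟩

theorem cosimplicial_unique_decomposition (X : CosimplicialObject (Type)) (q : ℕ)
    (x : X.obj (SimplexCategory.mk q)) :
    -- existence of a decomposition `x = D(y)`, `y` not a coface, `p ≤ q`
    (∃ (p : ℕ) (_ : p ≤ q) (D : SimplexCategory.mk p ⟶ SimplexCategory.mk q)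
        (y : X.obj (SimplexCategory.mk p)),
        Function.Injective D.toOrderHom ∧ NotCoface X y ∧ X.map D y = x) ∧
    -- uniqueness of `y` (hence of `p`), and uniqueness of the injection `D` unless
    -- `p = 0` and `d^0 y = d^1 y`
    (∀ (p₁ p₂ : ℕ)
        (D₁ : SimplexCategory.mk p₁ ⟶ SimplexCategory.mk q)
        (D₂ : SimplexCategory.mk p₂ ⟶ SimplexCategory.mk q)
        (y₁ : X.obj (SimplexCategory.mk p₁)) (y₂ : X.obj (SimplexCategory.mk p₂)),
        Function.Injective D₁.toOrderHom → Function.Injective D₂.toOrderHom →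
        NotCoface X y₁ → NotCoface X y₂ → X.map D₁ y₁ = x → X.map D₂ y₂ = x →
        p₁ = p₂ ∧ HEq y₁ y₂ ∧
          (¬ (p₁ = 0 ∧ X.δ 0 y₁ = X.δ 1 y₁) → HEq D₁ D₂)) ∧
    -- in the exceptional case all injections from `[0]` act equally
    (∀ (y : X.obj (SimplexCategory.mk 0)), X.δ 0 y = X.δ 1 y →
        ∀ (D D' : SimplexCategory.mk 0 ⟶ SimplexCategory.mk q),
          Function.Injective D.toOrderHom → Function.Injective D'.toOrderHom →
          X.map D y = X.map D' y) := by
  refine ⟨exists_notCoface_map_eq X x, ?_,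
    fun y hy D D' _ _ => CosimplicialObject.map_eq_map_of_δ_eq hy D D'⟩
  intro p₁ p₂ D₁ D₂ y₁ y₂ hD₁ hD₂ hy₁ hy₂ hx₁ hx₂
  have h : X.map D₁ y₁ = X.map D₂ y₂ := hx₁.trans hx₂.symm
  obtain rfl : p₁ = p₂ := le_antisymm (hy₁.le_of_map_eq hD₁ h) (hy₂.le_of_map_eq hD₂ h.symm)
  obtain rfl : y₂ = y₁ := hy₁.eq_of_map_eq hD₁ h
  refine ⟨rfl, HEq.rfl, fun hexc => heq_of_eq ?_⟩
  by_cases hp : p₁ = 0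
  · subst hp
    by_contra hne
    exact hexc ⟨rfl, CosimplicialObject.δ_eq_of_map_eq_of_ne hne h⟩
  · exact hy₁.hom_eq_of_map_eq hp hD₁ hD₂ h
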